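/- Let g : ℤ → ℝ be any function (in the paper, g = 𝓜^α f). Let x_1 < x_2 < … < x_N be integers such that g is not monotone on {x_1, …, x_N}, let k be the smallest index with g(x_k) < g(x_{k+1}), and let j be the largest index with g(x_j) < g(x_{j−1}). If k < j, then there exists a system of peaks 𝔓 for g whose points all belong to {x_k, …, x_j} such that Σ_{i=1}^{N−1} |g(x_{i+1}) − g(x_i)| ≤ (g(x_1) − g(x_k)) + Var_𝔓(g) + (g(x_N) − g(x_j)). If k ≥ j, then Σ_{i=1}^{N−1} |g(x_{i+1}) − g(x_i)| ≤ (g(x_1) − g(x_j)) + (g(x_N) − g(x_k)). -/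
import Mathlib


/-- `p 0 < r 0 < p 1 = q 0 < r 1 < … < r (n-1) < p n` is a system of `n` peaks for `g`:
each triple `p i < r i < p (i+1)` is a peak, i.e. `g (p i) < g (r i) > g (p (i+1))`. -/
def IsPeakSystem {X : Type*} [LinearOrder X] (g : X → ℝ) (n : ℕ) (p r : ℕ → X) : Prop :=
  0 < n ∧ ∀ i < n, p i < r i ∧ r i < p (i + 1) ∧ g (p i) < g (r i) ∧ g (p (i + 1)) < g (r i)

/-- The variation of `g` over the system of peaks `p, r`: the sum over the peaks
of `2 g(r_i) − g(p_i) − g(q_i)`. -/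
def peakVar {X : Type*} (g : X → ℝ) (n : ℕ) (p r : ℕ → X) : ℝ :=
  ∑ i ∈ Finset.range n, (2 * g (r i) - g (p i) - g (p (i + 1)))


private lemma tv_mono' (f : ℕ → ℝ) (a : ℕ) :
    ∀ c, a ≤ c → (∀ i, a ≤ i → i < c → f i ≤ f (i + 1)) →
    ∑ i ∈ Finset.Ico a c, |f (i + 1) - f i| = f c - f a := by
  refine Nat.le_induction ?_ ?_
  · intro _; simp
  · intro c hc ih hstep
    rw [Finset.sum_Ico_succ_top hc,
      ih (fun i hi hic => hstep i hi (hic.trans (Nat.lt_succ_self c)))]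
    have h := hstep c hc (Nat.lt_succ_self c)
    rw [abs_of_nonneg (by linarith)]
    ring

private lemma tv_anti' (f : ℕ → ℝ) (a : ℕ) :
    ∀ c, a ≤ c → (∀ i, a ≤ i → i < c → f (i + 1) ≤ f i) →
    ∑ i ∈ Finset.Ico a c, |f (i + 1) - f i| = f a - f c := by
  intro c hc hstep
  have := tv_mono' (fun i => -f i) a c hc (fun i hi hic => by
    simpa using hstep i hi hic)
  rw [show f a - f c = (fun i => -f i) c - (fun i => -f i) a by simp; ring, ← this]
  apply Finset.sum_congr rfl
  intro i _
  rw [← abs_neg]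
  congr 1
  simp
  ring

private lemma key_peaks (g : ℤ → ℝ) (x : ℕ → ℤ) (b : ℕ)
    (hdec : g (x b) < g (x (b - 1))) :
    ∀ d a, b ≤ a + d → a < b →
    (∀ i m, a ≤ i → i < m → m ≤ b → x i < x m) →
    g (x a) < g (x (a + 1)) →
    ∃ n p r, IsPeakSystem g n p r ∧ p 0 = x a ∧ p n = x b ∧
      (∀ i ≤ n, ∃ m, a ≤ m ∧ m ≤ b ∧ p i = x m) ∧
      (∀ i < n, ∃ m, a ≤ m ∧ m ≤ b ∧ r i = x m) ∧
      ∑ i ∈ Finset.Ico a b, |g (x (i + 1)) - g (x i)| ≤ peakVar g n p r := by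
  intro d
  induction d with
  | zero => intro a h1 h2; omega
  | succ d ih =>
    intro a hle hab hmono hinc
    classical
    set f : ℕ → ℝ := fun i => g (x i) with hf
    -- first strict decrease r0
    have hexr : ∃ i, a ≤ i ∧ i < b ∧ g (x (i + 1)) < g (x i) := by
      refine ⟨b - 1, by omega, by omega, ?_⟩
      have hb : b - 1 + 1 = b := by omega
      rw [hb]; exact hdec
    set r0 := Nat.find hexr with hr0def
    obtain ⟨har0, hr0b, hr0dec⟩ := Nat.find_spec hexr
    have har0' : a < r0 := by
      rcases lt_or_eq_of_le har0 with h | h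
      · exact h
      · exfalso; rw [← h] at hr0dec; linarith
    have hstep1 : ∀ i, a ≤ i → i < r0 → f i ≤ f (i + 1) := by
      intro i hi hir
      by_contra hcon
      exact Nat.find_min hexr hir ⟨hi, by omega, by simpa [f] using lt_of_not_ge hcon⟩
    have htv1 : ∑ i ∈ Finset.Ico a r0, |f (i + 1) - f i| = f r0 - f a :=
      tv_mono' f a r0 (le_of_lt har0') hstep1
    have hfar0 : f a < f r0 := by
      have h2 : f (a+1) ≤ f r0 := by
        have := tv_mono' f (a+1) r0 (by omega)
          (fun i hi hir => hstep1 i (by omega) hir)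
        have hnn : (0:ℝ) ≤ ∑ i ∈ Finset.Ico (a+1) r0, |f (i + 1) - f i| :=
          Finset.sum_nonneg (fun i _ => abs_nonneg _)
        linarith
      exact lt_of_lt_of_le hinc h2
    -- first strict increase (or end) p1
    have hexp : ∃ i, r0 < i ∧ i ≤ b ∧ (i = b ∨ g (x i) < g (x (i + 1))) :=
      ⟨b, hr0b, le_refl b, Or.inl rfl⟩
    set p1 := Nat.find hexp with hp1def
    obtain ⟨hr0p1, hp1b, hp1disj⟩ := Nat.find_spec hexp
    have hstep2 : ∀ i, r0 ≤ i → i < p1 → f (i + 1) ≤ f i := by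
      intro i hi hip
      rcases lt_or_eq_of_le hi with h | h
      · by_contra hcon
        have hib : i < b := lt_of_lt_of_le hip hp1b
        exact Nat.find_min hexp hip ⟨h, le_of_lt hib,
          Or.inr (by simpa [f] using lt_of_not_ge hcon)⟩
      · rw [← h]; exact le_of_lt hr0dec
    have htv2 : ∑ i ∈ Finset.Ico r0 p1, |f (i + 1) - f i| = f r0 - f p1 :=
      tv_anti' f r0 p1 (le_of_lt hr0p1) hstep2
    have hfp1r0 : f p1 < f r0 := by
      have h2 : f p1 ≤ f (r0+1) := by
        have := tv_anti' f (r0+1) p1 (by omega)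
          (fun i hi hir => hstep2 i (by omega) hir)
        have hnn : (0:ℝ) ≤ ∑ i ∈ Finset.Ico (r0+1) p1, |f (i + 1) - f i| :=
          Finset.sum_nonneg (fun i _ => abs_nonneg _)
        linarith
      exact lt_of_le_of_lt h2 hr0dec
    have hsplit1 : ∑ i ∈ Finset.Ico a p1, |f (i + 1) - f i|
        = (f r0 - f a) + (f r0 - f p1) := by
      rw [← Finset.sum_Ico_consecutive _ (le_of_lt har0') (le_of_lt hr0p1), htv1, htv2]
    rcases eq_or_lt_of_le hp1b with hp1eq | hp1lt
    · -- single peak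
      refine ⟨1, fun i => if i = 0 then x a else x b, fun _ => x r0, ?_, by simp, by simp,
        ?_, ?_, ?_⟩
      · refine ⟨one_pos, ?_⟩
        intro i hi
        interval_cases i
        simp only [if_pos rfl, if_neg one_ne_zero]
        refine ⟨hmono a r0 le_rfl har0' (le_of_lt hr0b),
          hmono r0 b har0 hr0b le_rfl, hfar0, ?_⟩
        show f b < f r0
        rw [← hp1eq]; exact hfp1r0
      · intro i hi
        interval_cases i
        · exact ⟨a, le_rfl, by omega, by simp⟩
        · exact ⟨b, by omega, le_rfl, by simp⟩
      · intro i hi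
        exact ⟨r0, har0, le_of_lt hr0b, rfl⟩
      · have heq : ∑ i ∈ Finset.Ico a b, |f (i + 1) - f i|
            = (f r0 - f a) + (f r0 - f b) := by rw [← hp1eq]; exact hsplit1
        rw [heq]
        simp only [peakVar, Finset.sum_range_one, if_pos rfl, if_neg one_ne_zero]
        show (f r0 - f a) + (f r0 - f b) ≤ 2 * f r0 - f a - f b
        linarith
    · -- recurse
      have hp1inc : g (x p1) < g (x (p1 + 1)) := by
        rcases hp1disj with h | h
        · omega
        · exact h
      obtain ⟨n', p', r', hsys, hp'0, hp'n, hpm, hrm, hsum'⟩ :=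
        ih p1 (by omega) hp1lt
          (fun i m hi him hmb =>
            hmono i m (le_trans (le_of_lt (lt_trans har0' hr0p1)) hi) him hmb)
          hp1inc
      refine ⟨n' + 1, fun i => if i = 0 then x a else p' (i - 1),
        fun i => if i = 0 then x r0 else r' (i - 1), ?_, by simp, ?_, ?_, ?_, ?_⟩
      · refine ⟨Nat.succ_pos _, ?_⟩
        intro i hi
        match i with
        | 0 =>
          simp only [if_pos rfl, if_neg one_ne_zero]
          have h01 : (1 : ℕ) - 1 = 0 := rfl
          rw [h01, hp'0]
          exact ⟨hmono a r0 le_rfl har0' (by omega),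
            hmono r0 p1 har0 hr0p1 hp1b, hfar0, hfp1r0⟩
        | (m + 1) =>
          have hm : m < n' := by omega
          obtain ⟨h1, h2, h3, h4⟩ := hsys.2 m hm
          simp only [if_neg (Nat.succ_ne_zero m), Nat.succ_sub_one,
            if_neg (Nat.succ_ne_zero (m+1))]
          exact ⟨h1, h2, h3, h4⟩
      · simp only [if_neg (Nat.succ_ne_zero n'), Nat.succ_sub_one]
        exact hp'n
      · intro i hi
        match i with
        | 0 => exact ⟨a, le_rfl, by omega, by simp⟩
        | (m + 1) =>
          obtain ⟨m', hm1, hm2, hm3⟩ := hpm m (by omega)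
          exact ⟨m', by omega, hm2, by simpa using hm3⟩
      · intro i hi
        match i with
        | 0 => exact ⟨r0, har0, by omega, by simp⟩
        | (m + 1) =>
          obtain ⟨m', hm1, hm2, hm3⟩ := hrm m (by omega)
          exact ⟨m', by omega, hm2, by simpa using hm3⟩
      · have hsplit : ∑ i ∈ Finset.Ico a b, |f (i + 1) - f i|
            = (∑ i ∈ Finset.Ico a p1, |f (i + 1) - f i|)
            + ∑ i ∈ Finset.Ico p1 b, |f (i + 1) - f i| :=
          (Finset.sum_Ico_consecutive _ (by omega) (le_of_lt hp1lt)).symm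
        have hpv : peakVar g (n' + 1) (fun i => if i = 0 then x a else p' (i - 1))
            (fun i => if i = 0 then x r0 else r' (i - 1))
            = peakVar g n' p' r' + (2 * g (x r0) - g (x a) - g (x p1)) := by
          unfold peakVar
          rw [Finset.sum_range_succ']
          simp [hp'0]
        rw [hsplit, hpv, hsplit1]
        have h1 : f p1 = g (x p1) := rfl
        have h2 : f r0 = g (x r0) := rfl
        have h3 : f a = g (x a) := rfl
        have h4 : ∑ i ∈ Finset.Ico p1 b, |f (i + 1) - f i| ≤ peakVar g n' p' r' := hsum'
        linarith

private lemma xmono' (x : ℕ → ℤ) (N : ℕ) (hx : ∀ i, 1 ≤ i → i < N → x i < x (i + 1)) :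
    ∀ i m, 1 ≤ i → i < m → m ≤ N → x i < x m := by
  intro i m h1
  induction m with
  | zero => intro h; omega
  | succ m ihm =>
    intro him hmN
    rcases Nat.lt_or_ge i m with h | h
    · exact (ihm h (by omega)).trans (hx m (by omega) (by omega))
    · have : i = m := by omega
      rw [← this]
      exact hx i h1 (by omega)

/-- Decomposition of the variation of a discrete function `g : ℤ → ℝ` on a finite set
`x_1 < … < x_N` into a monotone beginning, a system of peaks, and a monotone end. -/
theorem discrete_divide_int (g : ℤ → ℝ)
    (N : ℕ) (x : ℕ → ℤ) (hx : ∀ i, 1 ≤ i → i < N → x i < x (i + 1))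
    (hnotmono : ¬ MonotoneOn (fun i => g (x i)) (Set.Icc 1 N) ∧
      ¬ AntitoneOn (fun i => g (x i)) (Set.Icc 1 N))
    (k : ℕ) (hk : 1 ≤ k ∧ k < N) (hk2 : g (x k) < g (x (k + 1)))
    (hkmin : ∀ i, 1 ≤ i → i < k → ¬ g (x i) < g (x (i + 1)))
    (j : ℕ) (hj : 1 < j ∧ j ≤ N) (hj2 : g (x j) < g (x (j - 1)))
    (hjmax : ∀ i, j < i → i ≤ N → ¬ g (x i) < g (x (i - 1))) :
    (k < j →
      ∃ n : ℕ, ∃ p r : ℕ → ℤ, IsPeakSystem g n p r ∧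
        (∀ i ≤ n, ∃ m, k ≤ m ∧ m ≤ j ∧ p i = x m) ∧
        (∀ i < n, ∃ m, k ≤ m ∧ m ≤ j ∧ r i = x m) ∧
        ∑ i ∈ Finset.Ico 1 N, |g (x (i + 1)) - g (x i)| ≤
          (g (x 1) - g (x k)) + peakVar g n p r + (g (x N) - g (x j))) ∧
    (j ≤ k →
      ∑ i ∈ Finset.Ico 1 N, |g (x (i + 1)) - g (x i)| ≤
        (g (x 1) - g (x j)) + (g (x N) - g (x k))) := by
  set f : ℕ → ℝ := fun i => g (x i) with hf
  have hstepdec : ∀ i, 1 ≤ i → i < k → f (i + 1) ≤ f i := by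
    intro i h1 h2
    exact le_of_not_gt (hkmin i h1 h2)
  have hstepinc : ∀ i, j ≤ i → i < N → f i ≤ f (i + 1) := by
    intro i h1 h2
    have := hjmax (i + 1) (by omega) (by omega)
    simpa using le_of_not_gt this
  constructor
  · -- k < j
    intro hkj
    obtain ⟨n, p, r, hsys, hp0, hpn, hpm, hrm, hsum⟩ :=
      key_peaks g x j hj2 j k (by omega) hkj
        (fun i m hi him hmj => xmono' x N hx i m (by omega) him (by omega)) hk2
    refine ⟨n, p, r, hsys, hpm, hrm, ?_⟩
    have hs1 : ∑ i ∈ Finset.Ico 1 k, |f (i + 1) - f i| = f 1 - f k :=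
      tv_anti' f 1 k hk.1 hstepdec
    have hs3 : ∑ i ∈ Finset.Ico j N, |f (i + 1) - f i| = f N - f j :=
      tv_mono' f j N hj.2 hstepinc
    have hsplit : ∑ i ∈ Finset.Ico 1 N, |f (i + 1) - f i|
        = (∑ i ∈ Finset.Ico 1 k, |f (i + 1) - f i|)
        + (∑ i ∈ Finset.Ico k j, |f (i + 1) - f i|)
        + ∑ i ∈ Finset.Ico j N, |f (i + 1) - f i| := by
      rw [Finset.sum_Ico_consecutive _ hk.1 (le_of_lt hkj),
        Finset.sum_Ico_consecutive _ (le_trans hk.1 (le_of_lt hkj)) hj.2]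
    calc ∑ i ∈ Finset.Ico 1 N, |f (i + 1) - f i|
        = (f 1 - f k) + (∑ i ∈ Finset.Ico k j, |f (i + 1) - f i|) + (f N - f j) := by
          rw [hsplit, hs1, hs3]
      _ ≤ (f 1 - f k) + peakVar g n p r + (f N - f j) := by
          have : ∑ i ∈ Finset.Ico k j, |f (i + 1) - f i| ≤ peakVar g n p r := hsum
          linarith
  · -- j ≤ k
    intro hjk
    have hs1 : ∑ i ∈ Finset.Ico 1 j, |f (i + 1) - f i| = f 1 - f j :=
      tv_anti' f 1 j (by omega) (fun i h1 h2 => hstepdec i h1 (by omega))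
    have hs3 : ∑ i ∈ Finset.Ico k N, |f (i + 1) - f i| = f N - f k :=
      tv_mono' f k N (by omega) (fun i h1 h2 => hstepinc i (by omega) h2)
    have hs2 : ∑ i ∈ Finset.Ico j k, |f (i + 1) - f i| = 0 := by
      apply Finset.sum_eq_zero
      intro i hi
      rw [Finset.mem_Ico] at hi
      have h1 : f (i + 1) ≤ f i := hstepdec i (by omega) hi.2
      have h2 : f i ≤ f (i + 1) := hstepinc i hi.1 (by omega)
      rw [abs_eq_zero]
      linarith
    have hsplit : ∑ i ∈ Finset.Ico 1 N, |f (i + 1) - f i|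
        = (∑ i ∈ Finset.Ico 1 j, |f (i + 1) - f i|)
        + (∑ i ∈ Finset.Ico j k, |f (i + 1) - f i|)
        + ∑ i ∈ Finset.Ico k N, |f (i + 1) - f i| := by
      rw [Finset.sum_Ico_consecutive _ (by omega : 1 ≤ j) hjk,
        Finset.sum_Ico_consecutive _ (by omega : 1 ≤ k) (by omega : k ≤ N)]
    rw [hsplit, hs1, hs2, hs3]
    show (f 1 - f j) + 0 + (f N - f k) ≤ (f 1 - f j) + (f N - f k)
    linarith
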